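/- arXiv:2501.15940 — 2 statements merged into one kernel-verified Lean document; each statement's English description precedes it below -/
import Mathlib

section
/- Let A ∈ M(2,ℂ) be nonzero with singular values σ₁(A) ≥ σ₂(A), and suppose σ₁(A) > σ₂(A). Let s(A) denote the most contracted direction of A (the unit eigenvector direction of A*A for eigenvalue σ₂(A)²). If z is a unit vector in ℂ² with ‖A z‖ < δ, then the distance between the line spanned by z and s(A) satisfies d(span z, s(A)) ≤ 2(δ + σ₂(A))/σ₁(A). -/
/-!
Applying `A` multiplies the determinant of a pair of vectors by `det A`, so
`|det A| |det(z, s)| ≤ ‖A z‖ ‖A s‖ = σ₂ ‖A z‖`; since `|det A| = σ₁ σ₂` this gives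
`σ₁ |det(z, s)| ≤ ‖A z‖ < δ`. When `σ₂ = 0` we cannot divide by it, but then `A s = 0` and
`A x = det(x, s) • A w` for the unit vector `w` orthogonal to `s`, which gives the same inequality.
-/

noncomputable section
open Matrix
def vnorm (v : Fin 2 → ℂ) : ℝ := Real.sqrt (‖v 0‖ ^ 2 + ‖v 1‖ ^ 2)
def opNorm (A : Matrix (Fin 2) (Fin 2) ℂ) : ℝ :=
  ‖(Matrix.toEuclideanCLM (𝕜 := ℂ) (n := Fin 2) A)‖
def sigma1 (A : Matrix (Fin 2) (Fin 2) ℂ) : ℝ := opNorm A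
def sigma2 (A : Matrix (Fin 2) (Fin 2) ℂ) : ℝ := ‖A.det‖ / opNorm A
def dLine (u v : Fin 2 → ℂ) : ℝ := 2 * ‖u 0 * v 1 - u 1 * v 0‖
def prodSeq (B : ℤ → Matrix (Fin 2) (Fin 2) ℂ) : ℕ → ℤ → Matrix (Fin 2) (Fin 2) ℂ
  | 0, _ => 1
  | n+1, j => B (j + n) * prodSeq B n j
def IsMostContracted (A : Matrix (Fin 2) (Fin 2) ℂ) (w : Fin 2 → ℂ) : Prop :=
  vnorm w = 1 ∧ vnorm (A.mulVec w) = sigma2 A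
def IsMostExpandedImage (A : Matrix (Fin 2) (Fin 2) ℂ) (w : Fin 2 → ℂ) : Prop :=
  vnorm w = 1 ∧ ∃ z : Fin 2 → ℂ, vnorm z = 1 ∧ vnorm (A.mulVec z) = sigma1 A ∧ ∃ c : ℂ, A.mulVec z = c • w

open ComplexConjugate

lemma vnorm_eq_norm_toLp (v : Fin 2 → ℂ) : vnorm v = ‖WithLp.toLp 2 v‖ := by
  simp [vnorm, EuclideanSpace.norm_eq, Fin.sum_univ_two]

lemma vnorm_nonneg (v : Fin 2 → ℂ) : 0 ≤ vnorm v := Real.sqrt_nonneg _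

lemma vnorm_sq (v : Fin 2 → ℂ) : vnorm v ^ 2 = ‖v 0‖ ^ 2 + ‖v 1‖ ^ 2 :=
  Real.sq_sqrt (by positivity)

lemma vnorm_eq_zero {v : Fin 2 → ℂ} : vnorm v = 0 ↔ v = 0 := by
  rw [vnorm_eq_norm_toLp, norm_eq_zero, WithLp.toLp_eq_zero]

lemma vnorm_smul (c : ℂ) (v : Fin 2 → ℂ) : vnorm (c • v) = ‖c‖ * vnorm v := by
  rw [vnorm_eq_norm_toLp, vnorm_eq_norm_toLp, WithLp.toLp_smul, norm_smul]

lemma norm_det_le_vnorm_mul_vnorm (u v : Fin 2 → ℂ) :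
    ‖u 0 * v 1 - u 1 * v 0‖ ≤ vnorm u * vnorm v := by
  have hcs : ‖u 0‖ * ‖v 1‖ + ‖u 1‖ * ‖v 0‖ ≤ vnorm u * vnorm v := by
    rw [vnorm, vnorm, ← Real.sqrt_mul (by positivity)]
    apply Real.le_sqrt_of_sq_le
    nlinarith [sq_nonneg (‖u 0‖ * ‖v 0‖ - ‖u 1‖ * ‖v 1‖)]
  calc ‖u 0 * v 1 - u 1 * v 0‖ ≤ ‖u 0 * v 1‖ + ‖u 1 * v 0‖ := norm_sub_le _ _
    _ ≤ vnorm u * vnorm v := by rwa [norm_mul, norm_mul]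

lemma det_mulVec_mulVec (A : Matrix (Fin 2) (Fin 2) ℂ) (u v : Fin 2 → ℂ) :
    (A *ᵥ u) 0 * (A *ᵥ v) 1 - (A *ᵥ u) 1 * (A *ᵥ v) 0 = A.det * (u 0 * v 1 - u 1 * v 0) := by
  simp only [mulVec, dotProduct, Fin.sum_univ_two, det_fin_two]
  ring

lemma opNorm_le_of_vnorm_mulVec_le {A : Matrix (Fin 2) (Fin 2) ℂ} {C : ℝ} (hC : 0 ≤ C)
    (h : ∀ x, vnorm (A *ᵥ x) ≤ C * vnorm x) : opNorm A ≤ C :=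
  ContinuousLinearMap.opNorm_le_bound _ hC fun x => by
    have hx := h (WithLp.ofLp x)
    rwa [vnorm_eq_norm_toLp, vnorm_eq_norm_toLp] at hx

lemma sigma1_pos {A : Matrix (Fin 2) (Fin 2) ℂ} (hA : A ≠ 0) : 0 < sigma1 A :=
  norm_pos_iff.mpr ((map_ne_zero_iff _ toEuclideanCLM.injective).mpr hA)

lemma sigma1_mul_sigma2 {A : Matrix (Fin 2) (Fin 2) ℂ} (hA : A ≠ 0) :
    sigma1 A * sigma2 A = ‖A.det‖ :=
  mul_div_cancel₀ _ (sigma1_pos hA).ne'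

lemma mulVec_eq_smul_of_mulVec_eq_zero {A : Matrix (Fin 2) (Fin 2) ℂ} {s : Fin 2 → ℂ}
    (hs : vnorm s = 1) (hAs : A *ᵥ s = 0) (x : Fin 2 → ℂ) :
    A *ᵥ x = (x 0 * s 1 - x 1 * s 0) • A *ᵥ ![conj (s 1), -conj (s 0)] := by
  have hunit : s 0 * conj (s 0) + s 1 * conj (s 1) = 1 := by
    have h : ‖s 0‖ ^ 2 + ‖s 1‖ ^ 2 = 1 := by rw [← vnorm_sq, hs, one_pow]
    simp only [Complex.mul_conj']
    exact_mod_cast h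
  ext i
  have hAsi : A i 0 * s 0 + A i 1 * s 1 = 0 := by
    simpa [mulVec, dotProduct, Fin.sum_univ_two] using congrFun hAs i
  simp only [mulVec, dotProduct, Fin.sum_univ_two, Pi.smul_apply, smul_eq_mul,
    cons_val_zero, cons_val_one]
  linear_combination (conj (s 0) * x 0 + conj (s 1) * x 1) * hAsi -
    (A i 0 * x 0 + A i 1 * x 1) * hunit

lemma sigma1_mul_norm_det_le_of_mulVec_eq_zero {A : Matrix (Fin 2) (Fin 2) ℂ}
    {s : Fin 2 → ℂ} (hs : vnorm s = 1) (hAs : A *ᵥ s = 0) (z : Fin 2 → ℂ) :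
    sigma1 A * ‖z 0 * s 1 - z 1 * s 0‖ ≤ vnorm (A *ᵥ z) := by
  set w : Fin 2 → ℂ := ![conj (s 1), -conj (s 0)]
  have hnorm : ∀ x, vnorm (A *ᵥ x) = vnorm (A *ᵥ w) * ‖x 0 * s 1 - x 1 * s 0‖ := fun x => by
    rw [mulVec_eq_smul_of_mulVec_eq_zero hs hAs x, vnorm_smul, mul_comm]
  have hσ1 : sigma1 A ≤ vnorm (A *ᵥ w) :=
    opNorm_le_of_vnorm_mulVec_le (vnorm_nonneg _) fun x => by
      rw [hnorm]
      exact mul_le_mul_of_nonneg_left (by simpa [hs] using norm_det_le_vnorm_mul_vnorm x s)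
        (vnorm_nonneg _)
  rw [hnorm]
  gcongr

lemma sigma1_mul_norm_det_le_of_sigma2_pos {A : Matrix (Fin 2) (Fin 2) ℂ} (hA : A ≠ 0)
    (h2 : 0 < sigma2 A) {s : Fin 2 → ℂ} (hs : vnorm (A *ᵥ s) = sigma2 A) (z : Fin 2 → ℂ) :
    sigma1 A * ‖z 0 * s 1 - z 1 * s 0‖ ≤ vnorm (A *ᵥ z) := by
  refine le_of_mul_le_mul_left ?_ h2
  calc sigma2 A * (sigma1 A * ‖z 0 * s 1 - z 1 * s 0‖)
      = ‖A.det‖ * ‖z 0 * s 1 - z 1 * s 0‖ := by rw [← sigma1_mul_sigma2 hA]; ring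
    _ = ‖(A *ᵥ z) 0 * (A *ᵥ s) 1 - (A *ᵥ z) 1 * (A *ᵥ s) 0‖ := by
      rw [det_mulVec_mulVec, norm_mul]
    _ ≤ vnorm (A *ᵥ z) * vnorm (A *ᵥ s) := norm_det_le_vnorm_mul_vnorm _ _
    _ = sigma2 A * vnorm (A *ᵥ z) := by rw [hs, mul_comm]

theorem sigma1_mul_norm_det_le {A : Matrix (Fin 2) (Fin 2) ℂ} (hA : A ≠ 0) {s : Fin 2 → ℂ}
    (hs : IsMostContracted A s) (z : Fin 2 → ℂ) :
    sigma1 A * ‖z 0 * s 1 - z 1 * s 0‖ ≤ vnorm (A *ᵥ z) := by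
  obtain ⟨hs1, hs2⟩ := hs
  rcases (hs2 ▸ vnorm_nonneg _ : 0 ≤ sigma2 A).eq_or_lt with h2 | h2
  · exact sigma1_mul_norm_det_le_of_mulVec_eq_zero hs1 (vnorm_eq_zero.mp (h2 ▸ hs2)) z
  · exact sigma1_mul_norm_det_le_of_sigma2_pos hA h2 hs2 z

theorem stmt6_general (A : Matrix (Fin 2) (Fin 2) ℂ) (hA : A ≠ 0)
    (s : Fin 2 → ℂ) (hs : IsMostContracted A s)
    (z : Fin 2 → ℂ) (δ : ℝ) (hAz : vnorm (A.mulVec z) < δ) :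
    dLine z s ≤ 2 * (δ + sigma2 A) / sigma1 A := by
  have hσ2 : 0 ≤ sigma2 A := hs.2 ▸ vnorm_nonneg _
  have hkey := sigma1_mul_norm_det_le hA hs z
  rw [dLine, le_div_iff₀ (sigma1_pos hA)]
  linarith

theorem stmt6 (A : Matrix (Fin 2) (Fin 2) ℂ) (hA : A ≠ 0) (hgap : sigma2 A < sigma1 A)
    (s : Fin 2 → ℂ) (hs : IsMostContracted A s)
    (z : Fin 2 → ℂ) (hz : vnorm z = 1) (δ : ℝ) (hAz : vnorm (A.mulVec z) < δ) :
    dLine z s ≤ 2 * (δ + sigma2 A) / sigma1 A :=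
  stmt6_general A hA s hs z δ hAz
end
end

section
/- Let Λ : ℤ → M(2,ℂ) be a diagonal sequence Λ(j) = diag(λ_j⁺, λ_j⁻) with |λ_j⁺| ≥ η > 0, ‖Λ(j)‖ < M, and suppose there exists Ñ such that for all n ≥ Ñ and all j, |∏_{k=0}^{n−1} λ_{j+k}⁺| = ‖Λ_n(j)‖. Then Λ satisfies the fast invertibility bound: for all n ≥ 0 and j, ‖Λ_{n+1}(j)‖ / (‖Λ(j)‖·‖Λ_n(j+1)‖) ≥ min(η/M, (η/M)^{Ñ}) and ‖Λ_{n+1}(j)‖ / (‖Λ_n(j)‖·‖Λ(j+n)‖) ≥ min(η/M, (η/M)^{Ñ}). -/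
noncomputable section
open Matrix
/-! For `n ≥ Ñ` both `Λ_{n+1}(j)` and the shorter product have norm equal to the modulus of their
`λ⁺`-entry, so the ratio collapses to `|λ⁺_i| / ‖Λ(i)‖ ≥ η / M`. For `n < Ñ` one only compares
`‖Λ_{n+1}(j)‖ ≥ |∏ λ⁺| ≥ η^(n+1)` with the submultiplicative bound `M^(n+1)` on the denominator. -/

lemma opNorm_nonneg (A : Matrix (Fin 2) (Fin 2) ℂ) : 0 ≤ opNorm A := norm_nonneg _

lemma opNorm_one : opNorm (1 : Matrix (Fin 2) (Fin 2) ℂ) = 1 := by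
  rw [opNorm, _root_.map_one, norm_one]

lemma opNorm_mul_le (A B : Matrix (Fin 2) (Fin 2) ℂ) :
    opNorm (A * B) ≤ opNorm A * opNorm B := by
  simpa only [opNorm, _root_.map_mul] using norm_mul_le _ _

lemma norm_apply_le_opNorm (A : Matrix (Fin 2) (Fin 2) ℂ) (i k : Fin 2) :
    ‖A i k‖ ≤ opNorm A := by
  have h := (toEuclideanCLM (𝕜 := ℂ) A).le_opNorm (WithLp.toLp 2 (Pi.single k 1))
  rw [toEuclideanCLM_toLp, mulVec_single_one] at h
  calc ‖A i k‖ = ‖(WithLp.toLp 2 (A.col k) : EuclideanSpace ℂ (Fin 2)) i‖ := rfl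
    _ ≤ _ := PiLp.norm_apply_le _ i
    _ ≤ opNorm A := by simpa [opNorm] using h

lemma opNorm_prodSeq_le_pow {B : ℤ → Matrix (Fin 2) (Fin 2) ℂ} {M : ℝ}
    (hB : ∀ j, opNorm (B j) ≤ M) (n : ℕ) (j : ℤ) : opNorm (prodSeq B n j) ≤ M ^ n := by
  induction n with
  | zero => exact opNorm_one.le
  | succ n ih =>
    calc opNorm (prodSeq B (n + 1) j) ≤ opNorm (B (j + n)) * opNorm (prodSeq B n j) :=
          opNorm_mul_le _ _
      _ ≤ M * M ^ n :=
          mul_le_mul (hB _) ih (opNorm_nonneg _) ((opNorm_nonneg _).trans (hB 0))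
      _ = M ^ (n + 1) := (pow_succ' M n).symm

lemma prod_range_succ_shift (f : ℤ → ℂ) (n : ℕ) (j : ℤ) :
    ∏ k ∈ Finset.range (n + 1), f (j + k) = f j * ∏ k ∈ Finset.range n, f (j + 1 + k) := by
  rw [Finset.prod_range_succ', mul_comm]
  push_cast
  simp only [add_zero, add_assoc, add_comm (1 : ℤ)]

lemma min_le_div_of_pow_le {η M x D : ℝ} {m Nt : ℕ} (hη : 0 ≤ η) (hηM : η ≤ M)
    (hm : m ≤ Nt) (hx : η ^ m ≤ x) (hD : 0 < D) (hDM : D ≤ M ^ m) :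
    min (η / M) ((η / M) ^ Nt) ≤ x / D :=
  calc min (η / M) ((η / M) ^ Nt) ≤ (η / M) ^ Nt := min_le_right _ _
    _ ≤ (η / M) ^ m := pow_le_pow_of_le_one (div_nonneg hη (hη.trans hηM))
        (div_le_one_of_le₀ hηM (hη.trans hηM)) hm
    _ = η ^ m / M ^ m := div_pow _ _ _
    _ ≤ x / D := div_le_div₀ ((pow_nonneg hη m).trans hx) hx hD hDM

section Diagonal

variable {lp lm : ℤ → ℂ} {Λ : ℤ → Matrix (Fin 2) (Fin 2) ℂ}

lemma prodSeq_eq_diagonal (hΛ : ∀ j, Λ j = diagonal ![lp j, lm j]) (n : ℕ) (j : ℤ) :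
    prodSeq Λ n j =
      diagonal ![∏ k ∈ Finset.range n, lp (j + k), ∏ k ∈ Finset.range n, lm (j + k)] := by
  induction n with
  | zero => simp [prodSeq, ← diagonal_one]
  | succ n ih =>
    rw [prodSeq, hΛ, ih, diagonal_mul_diagonal]
    congr 1
    ext i
    fin_cases i <;> simp [Finset.prod_range_succ, mul_comm]

lemma norm_prod_le_opNorm_prodSeq (hΛ : ∀ j, Λ j = diagonal ![lp j, lm j]) (n : ℕ) (j : ℤ) :
    ‖∏ k ∈ Finset.range n, lp (j + k)‖ ≤ opNorm (prodSeq Λ n j) := by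
  simpa [prodSeq_eq_diagonal hΛ] using norm_apply_le_opNorm (prodSeq Λ n j) 0 0

lemma pow_le_opNorm_prodSeq (hΛ : ∀ j, Λ j = diagonal ![lp j, lm j]) {η : ℝ} (hη : 0 ≤ η)
    (hlp : ∀ j, η ≤ ‖lp j‖) (n : ℕ) (j : ℤ) : η ^ n ≤ opNorm (prodSeq Λ n j) :=
  calc η ^ n = ∏ _k ∈ Finset.range n, η := by simp
    _ ≤ ∏ k ∈ Finset.range n, ‖lp (j + k)‖ :=
        Finset.prod_le_prod (fun _ _ => hη) fun _ _ => hlp _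
    _ = ‖∏ k ∈ Finset.range n, lp (j + k)‖ := (norm_prod _ _).symm
    _ ≤ opNorm (prodSeq Λ n j) := norm_prod_le_opNorm_prodSeq hΛ n j

end Diagonal

section Dominated

variable {lp : ℤ → ℂ} {Λ : ℤ → Matrix (Fin 2) (Fin 2) ℂ} {Nt n : ℕ}

lemma opNorm_prodSeq_succ_eq_norm_mul
    (hnorm : ∀ m, Nt ≤ m → ∀ j,
      ‖∏ k ∈ Finset.range m, lp (j + k)‖ = opNorm (prodSeq Λ m j))
    (hn : Nt ≤ n) (j : ℤ) :
    opNorm (prodSeq Λ (n + 1) j) = ‖lp j‖ * opNorm (prodSeq Λ n (j + 1)) := by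
  rw [← hnorm _ (hn.trans n.le_succ), ← hnorm n hn, prod_range_succ_shift, norm_mul]

lemma opNorm_prodSeq_succ_eq_mul_norm
    (hnorm : ∀ m, Nt ≤ m → ∀ j,
      ‖∏ k ∈ Finset.range m, lp (j + k)‖ = opNorm (prodSeq Λ m j))
    (hn : Nt ≤ n) (j : ℤ) :
    opNorm (prodSeq Λ (n + 1) j) = opNorm (prodSeq Λ n j) * ‖lp (j + n)‖ := by
  rw [← hnorm _ (hn.trans n.le_succ), ← hnorm n hn, Finset.prod_range_succ, norm_mul]

end Dominated

theorem stmt10 (lp lm : ℤ → ℂ) (Λ : ℤ → Matrix (Fin 2) (Fin 2) ℂ)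
    (hΛ : ∀ j, Λ j = Matrix.diagonal ![lp j, lm j])
    (η M : ℝ) (hη : 0 < η) (hlp : ∀ j, η ≤ ‖lp j‖)
    (hM : ∀ j, opNorm (Λ j) < M)
    (Nt : ℕ)
    (hnorm : ∀ (n : ℕ), Nt ≤ n → ∀ j : ℤ,
      ‖∏ k ∈ Finset.range n, lp (j + k)‖ = opNorm (prodSeq Λ n j)) :
    ∀ (n : ℕ) (j : ℤ),
      opNorm (prodSeq Λ (n+1) j) / (opNorm (Λ j) * opNorm (prodSeq Λ n (j+1)))
        ≥ min (η / M) ((η / M) ^ Nt) ∧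
      opNorm (prodSeq Λ (n+1) j) / (opNorm (prodSeq Λ n j) * opNorm (Λ (j + n)))
        ≥ min (η / M) ((η / M) ^ Nt) := by
  intro n j
  have hlpΛ (i : ℤ) : ‖lp i‖ ≤ opNorm (Λ i) := by
    simpa [hΛ] using norm_apply_le_opNorm (Λ i) 0 0
  have hΛpos (i : ℤ) : 0 < opNorm (Λ i) := hη.trans_le ((hlp i).trans (hlpΛ i))
  have hprod_lb := pow_le_opNorm_prodSeq hΛ hη.le hlp
  have hprod_pos (m : ℕ) (i : ℤ) : 0 < opNorm (prodSeq Λ m i) :=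
    (pow_pos hη m).trans_le (hprod_lb m i)
  rcases le_or_gt Nt n with hn | hn
  · have hratio (i : ℤ) : min (η / M) ((η / M) ^ Nt) ≤ ‖lp i‖ / opNorm (Λ i) :=
      (min_le_left _ _).trans (div_le_div₀ (norm_nonneg _) (hlp i) (hΛpos i) (hM i).le)
    constructor
    · rw [ge_iff_le, opNorm_prodSeq_succ_eq_norm_mul hnorm hn,
        mul_div_mul_right _ _ (hprod_pos n _).ne']
      exact hratio j
    · rw [ge_iff_le, opNorm_prodSeq_succ_eq_mul_norm hnorm hn,
        mul_div_mul_left _ _ (hprod_pos n _).ne']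
      exact hratio _
  · have hηM : η ≤ M := (hlp 0).trans (hlpΛ 0) |>.trans (hM 0).le
    have hM0 : 0 ≤ M := hη.le.trans hηM
    have hpow := opNorm_prodSeq_le_pow (fun i => (hM i).le)
    refine ⟨min_le_div_of_pow_le hη.le hηM hn (hprod_lb _ j)
        (mul_pos (hΛpos j) (hprod_pos n _)) ?_,
      min_le_div_of_pow_le hη.le hηM hn (hprod_lb _ j)
        (mul_pos (hprod_pos n j) (hΛpos _)) ?_⟩
    · rw [pow_succ']
      exact mul_le_mul (hM j).le (hpow n _) (opNorm_nonneg _) hM0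
    · rw [pow_succ]
      exact mul_le_mul (hpow n j) (hM _).le (opNorm_nonneg _) (pow_nonneg hM0 n)
end
end
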